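/- Milnor's Lobachevsky function Λ(θ) = −∫₀^θ ln|2 sin t| dt is well-defined and continuous on ℝ, is π-periodic, and is odd: Λ(−θ) = −Λ(θ). -/

import Mathlib

/-!
The integrand `log |2 sin t|` is the logarithm of a function analytic on `ℝ`, hence locally
integrable, so `Λ` is a continuous primitive. Evenness and `π`-periodicity of the integrand give
oddness of `Λ` and reduce periodicity to `∫₀^π log |2 sin t| dt = 0`, which is
`π log 2 + ∫₀^π log (sin t) dt = π log 2 - π log 2`.
-/

/-- Milnor's Lobachevsky function `Λ(θ) = -∫₀^θ log |2 sin t| dt`. -/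
noncomputable def lobachevsky (θ : ℝ) : ℝ :=
  -∫ t in (0 : ℝ)..θ, Real.log |2 * Real.sin t|

open Real MeasureTheory intervalIntegral

theorem Function.Even.intervalIntegral_zero_neg {E : Type*} [NormedAddCommGroup E]
    [NormedSpace ℝ E] {f : ℝ → E} (hf : f.Even) (θ : ℝ) :
    ∫ t in 0..-θ, f t = -∫ t in 0..θ, f t := by
  rw [← integral_symm, ← neg_zero, ← integral_comp_neg, neg_zero, funext hf]

lemma intervalIntegrable_log_abs_two_mul_sin (a b : ℝ) :
    IntervalIntegrable (fun t => log |2 * sin t|) volume a b := by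
  have hanalytic : AnalyticOnNhd ℝ (fun t => 2 * sin t) (Set.uIcc a b) :=
    analyticOnNhd_const.mul analyticOnNhd_sin
  simpa only [log_abs, Function.comp_def] using hanalytic.meromorphicOn.intervalIntegrable_log

lemma integral_log_abs_two_mul_sin_zero_pi : ∫ t in 0..π, log |2 * sin t| = 0 := by
  have h_split : ∫ t in 0..π, log |2 * sin t| = ∫ t in 0..π, (log 2 + log (sin t)) := by
    refine integral_congr_ae ?_
    -- at `t = π` the two sides differ, since `log 0 = 0`
    filter_upwards [Measure.ae_ne volume π] with t htπ ht
    rw [Set.uIoc_of_le pi_pos.le] at ht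
    have hsin : 0 < sin t := sin_pos_of_pos_of_lt_pi ht.1 (lt_of_le_of_ne ht.2 htπ)
    rw [abs_of_pos (by positivity), log_mul two_ne_zero hsin.ne']
  have hlog_sin : IntervalIntegrable (fun t => log (sin t)) volume 0 π :=
    intervalIntegrable_log_sin
  rw [h_split, integral_add intervalIntegrable_const hlog_sin, integral_log_sin_zero_pi,
    intervalIntegral.integral_const, smul_eq_mul]
  ring

lemma continuous_lobachevsky : Continuous lobachevsky :=
  (continuous_primitive intervalIntegrable_log_abs_two_mul_sin 0).neg

lemma lobachevsky_add_pi (θ : ℝ) : lobachevsky (θ + π) = lobachevsky θ := by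
  have hperiodic : Function.Periodic (fun t => log |2 * sin t|) π := fun t => by
    simp only [sin_add_pi, mul_neg, abs_neg]
  rw [lobachevsky, lobachevsky, hperiodic.intervalIntegral_add_eq_add 0 θ
    intervalIntegrable_log_abs_two_mul_sin, zero_add, integral_log_abs_two_mul_sin_zero_pi,
    add_zero]

lemma lobachevsky_neg (θ : ℝ) : lobachevsky (-θ) = -lobachevsky θ := by
  have heven : Function.Even (fun t => log |2 * sin t|) := fun t => by
    simp only [sin_neg, mul_neg, abs_neg]
  rw [lobachevsky, lobachevsky, heven.intervalIntegral_zero_neg]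

/-- Milnor's Lobachevsky function is well-defined (the integrand is interval
integrable), continuous on ℝ, π-periodic, and odd. -/
theorem stmt16 :
    (∀ θ : ℝ, IntervalIntegrable (fun t => Real.log |2 * Real.sin t|)
      MeasureTheory.volume 0 θ) ∧
    Continuous lobachevsky ∧
    (∀ θ : ℝ, lobachevsky (θ + Real.pi) = lobachevsky θ) ∧
    (∀ θ : ℝ, lobachevsky (-θ) = -lobachevsky θ) :=
  ⟨intervalIntegrable_log_abs_two_mul_sin 0, continuous_lobachevsky, lobachevsky_add_pi,
    lobachevsky_neg⟩
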